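/- arXiv:1404.6299 — 2 statements merged into one kernel-verified Lean document; each statement's English description precedes it below -/
import Mathlib

section
/- In a bipartite graph H with parts X and T, if there exists a matching M saturating B := N_H(A) within the induced subgraph H[A ∪ B] for some A ⊆ T with |B| < |A|, and if moreover deg_H(y) ≥ deg_H(x) for every edge xy with x ∈ X, y ∈ T, and every vertex of A has degree at least 1, then a contradiction arises; i.e., there is no nonempty A ⊆ T with |N_H(A)| < |A| under these hypotheses. -/
open SimpleGraph

namespace VizingTwoFactor

variable {V : Type*}

/-- The degree of a vertex, as the `ncard` of its neighbor set. -/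
noncomputable def ndeg (G : SimpleGraph V) (v : V) : ℕ :=
  (G.neighborSet v).ncard

/-- `G` is bipartite with parts `X` and `T`. -/
def IsBipartiteWith (G : SimpleGraph V) (X T : Set V) : Prop :=
  Disjoint X T ∧ ∀ u v : V, G.Adj u v → (u ∈ X ∧ v ∈ T) ∨ (u ∈ T ∧ v ∈ X)

/-- The set of neighbors of a set of vertices. -/
def NSet (G : SimpleGraph V) (A : Set V) : Set V :=
  {v | ∃ a ∈ A, G.Adj a v}

/-- `G` has a matching saturating the vertex set `T`. -/
def HasMatchingSaturating (G : SimpleGraph V) (T : Set V) : Prop :=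
  ∃ M : G.Subgraph, M.IsMatching ∧ T ⊆ M.verts

/-- Number of (ordered) adjacent pairs with first coordinate in `A` and second in `B`;
for disjoint `A`, `B` this is the number of edges between `A` and `B`. -/
noncomputable def eBetween (G : SimpleGraph V) (A B : Set V) : ℕ :=
  {p : V × V | p.1 ∈ A ∧ p.2 ∈ B ∧ G.Adj p.1 p.2}.ncard

/-- Number of neighbors of `v` inside `A`. -/
noncomputable def degIn (G : SimpleGraph V) (A : Set V) (v : V) : ℕ :=
  (G.neighborSet v ∩ A).ncard

/-- The vertex set (in `V`) of a connected component of an induced subgraph. -/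
def csupp (G : SimpleGraph V) (U : Set V) (C : (G.induce U).ConnectedComponent) : Set V :=
  Subtype.val '' C.supp

/-- The odd components of `G − (S ∪ T)` w.r.t. `(S,T)`: components sending an odd
number of edges to `T`. -/
noncomputable def oddComps (G : SimpleGraph V) (S T : Set V) :
    Set ((G.induce (S ∪ T)ᶜ).ConnectedComponent) :=
  {C | Odd (eBetween G (csupp G (S ∪ T)ᶜ C) T)}

/-- `h_G(S,T)`: the number of odd components. -/
noncomputable def hNum (G : SimpleGraph V) (S T : Set V) : ℕ :=
  (oddComps G S T).ncard

/-- `δ_G(S,T) = 2|S| + Σ_{v∈T} deg_{G−S}(v) − 2|T| − h_G(S,T)`. -/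
noncomputable def deltaST (G : SimpleGraph V) (S T : Set V) : ℤ :=
  2 * S.ncard + (∑ᶠ v ∈ T, (degIn G Sᶜ v : ℤ)) - 2 * T.ncard - hNum G S T

/-- A barrier. -/
def IsBarrier (G : SimpleGraph V) (S T : Set V) : Prop :=
  Disjoint S T ∧ deltaST G S T ≤ -2

/-- A minimum barrier: minimizes `|S ∪ T|` among barriers. -/
def IsMinBarrier (G : SimpleGraph V) (S T : Set V) : Prop :=
  IsBarrier G S T ∧ ∀ S' T' : Set V, IsBarrier G S' T' → (S ∪ T).ncard ≤ (S' ∪ T').ncard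

/-- `G` has a 2-factor: a spanning subgraph in which every vertex has degree 2. -/
def HasTwoFactor (G : SimpleGraph V) : Prop :=
  ∃ H : SimpleGraph V, H ≤ G ∧ ∀ v : V, ndeg H v = 2

/-- `G` has a proper edge coloring with `k` colors. -/
def HasEdgeColoring (G : SimpleGraph V) (k : ℕ) : Prop :=
  ∃ f : G.edgeSet → Fin k, ∀ e₁ e₂ : G.edgeSet, e₁ ≠ e₂ →
    (∃ v : V, v ∈ (e₁ : Sym2 V) ∧ v ∈ (e₂ : Sym2 V)) → f e₁ ≠ f e₂

/-- The chromatic index `χ'(G)`. -/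
noncomputable def chromIdx (G : SimpleGraph V) : ℕ :=
  sInf {k | HasEdgeColoring G k}

/-- `Δ` is the maximum degree of `G`. -/
def IsMaxDegree (G : SimpleGraph V) (Δ : ℕ) : Prop :=
  (∀ v : V, ndeg G v ≤ Δ) ∧ ∃ v : V, ndeg G v = Δ

/-- `G` is `Δ`-critical: no isolated vertices, maximum degree `Δ`, `χ'(G) = Δ + 1`, and
`χ'(G − e) = Δ` for every edge `e`. -/
def IsDeltaCritical (G : SimpleGraph V) (Δ : ℕ) : Prop :=
  (∀ v : V, ∃ u : V, G.Adj v u) ∧ IsMaxDegree G Δ ∧ chromIdx G = Δ + 1 ∧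
    ∀ e ∈ G.edgeSet, chromIdx (G.deleteEdges {e}) = Δ

/-- `T` is an independent set in `G`. -/
def IsIndep (G : SimpleGraph V) (T : Set V) : Prop :=
  ∀ u ∈ T, ∀ v ∈ T, ¬ G.Adj u v

/-- The bipartite graph `H*` consisting of the edges of `G` between `V(G) \ T` and `T`. -/
def betweenGraph (G : SimpleGraph V) (T : Set V) : SimpleGraph V where
  Adj u v := G.Adj u v ∧ ((u ∉ T ∧ v ∈ T) ∨ (u ∈ T ∧ v ∉ T))
  symm := ⟨fun u v h => ⟨h.1.symm, h.2.elim (fun h' => Or.inr ⟨h'.2, h'.1⟩)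
    (fun h' => Or.inl ⟨h'.2, h'.1⟩)⟩⟩
  loopless := ⟨fun u h => G.irrefl h.1⟩

/-!
The degree sum over `A` counts the edges between `A` and `B = N(A)`, so it is at most the degree
sum over `B`. The matching sends `B` injectively into `A` along edges, which by the degree
condition do not decrease degree; hence the degree sum over `B` is at most the degree sum over its
image. Since `|B| < |A|`, that image misses a vertex of `A`, whose degree is positive: the degree
sum over `A` would exceed itself.
-/

lemma ndeg_pos_of_adj [Finite V] {G : SimpleGraph V} {v w : V} (h : G.Adj v w) :
    0 < ndeg G v :=
  Set.ncard_pos (Set.toFinite _) |>.mpr ⟨w, h⟩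

lemma IsBipartiteWith.mem_right_of_adj {G : SimpleGraph V} {X T : Set V}
    (h : IsBipartiteWith G X T) {x y : V} (hx : x ∈ X) (hxy : G.Adj x y) : y ∈ T :=
  (h.2 x y hxy).elim And.right fun hxT => absurd hxT.1 (Set.disjoint_left.mp h.1 hx)

lemma IsBipartiteWith.nset_subset {G : SimpleGraph V} {X T A : Set V}
    (h : IsBipartiteWith G X T) (hA : A ⊆ T) : NSet G A ⊆ X := by
  rintro x ⟨a, ha, hax⟩
  exact (h.2 a x hax).elim (fun haX => absurd (hA ha) (Set.disjoint_left.mp h.1 haX.1)) And.right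

lemma exists_injOn_adj_of_hasMatchingSaturating {G : SimpleGraph V} {U B : Set V}
    (hM : HasMatchingSaturating (G.induce U) (Subtype.val ⁻¹' B)) (hBU : B ⊆ U) :
    ∃ g : V → V, Set.InjOn g B ∧ ∀ x ∈ B, g x ∈ U ∧ G.Adj x (g x) := by
  obtain ⟨M, hMm, hMB⟩ := hM
  have hpartner : ∀ x, ∃ y, x ∈ B → ∃ (hx : x ∈ U) (hy : y ∈ U), M.Adj ⟨x, hx⟩ ⟨y, hy⟩ := by
    intro x
    by_cases hxB : x ∈ B
    · obtain ⟨w, hw, -⟩ := hMm (hMB (show (⟨x, hBU hxB⟩ : U).val ∈ B from hxB))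
      exact ⟨w, fun _ => ⟨hBU hxB, w.2, hw⟩⟩
    · exact ⟨x, fun h => absurd h hxB⟩
  choose g hg using hpartner
  refine ⟨g, fun x₁ h₁ x₂ h₂ heq => ?_, fun x hx => ?_⟩
  · obtain ⟨_, _, hM₁⟩ := hg x₁ h₁
    obtain ⟨_, _, hM₂⟩ := hg x₂ h₂
    simp only [← heq] at hM₂
    exact congrArg Subtype.val (hMm.eq_of_adj_right hM₁ hM₂)
  · obtain ⟨_, hy, hMx⟩ := hg x hx
    exact ⟨hy, M.adj_sub hMx⟩

lemma card_le_card_of_injOn_ndeg_le [Finite V] (G : SimpleGraph V) {A B : Finset V}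
    (hN : ∀ y ∈ A, ∀ v, G.Adj y v → v ∈ B) (hpos : ∀ y ∈ A, 0 < ndeg G y)
    {g : V → V} (hgA : Set.MapsTo g B A) (hinj : Set.InjOn g B)
    (hdeg : ∀ x ∈ B, ndeg G x ≤ ndeg G (g x)) : A.card ≤ B.card := by
  classical
  by_contra! hlt
  have himA : B.image g ⊆ A := Finset.image_subset_iff.mpr fun x hx => hgA hx
  obtain ⟨y, hyA, hyim⟩ : ∃ y ∈ A, y ∉ B.image g :=
    Finset.exists_mem_notMem_of_card_lt_card (by rwa [Finset.card_image_of_injOn hinj])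
  have hcount : ∑ y ∈ A, (B.bipartiteAbove G.Adj y).card
      = ∑ x ∈ B, (A.bipartiteBelow G.Adj x).card :=
    Finset.sum_card_bipartiteAbove_eq_sum_card_bipartiteBelow _
  have hA_deg : ∀ y ∈ A, ndeg G y = (B.bipartiteAbove G.Adj y).card := fun y hy => by
    rw [ndeg, ← Set.ncard_coe_finset]
    congr 1
    ext v
    simpa [Finset.bipartiteAbove] using hN y hy v
  have hB_deg : ∀ x ∈ B, (A.bipartiteBelow G.Adj x).card ≤ ndeg G x := fun x _ => by
    rw [ndeg, ← Set.ncard_coe_finset]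
    exact Set.ncard_le_ncard (fun v hv => by simp_all [Finset.bipartiteBelow, G.adj_comm])
  have := calc ∑ y ∈ A, ndeg G y
      = ∑ x ∈ B, (A.bipartiteBelow G.Adj x).card := (Finset.sum_congr rfl hA_deg).trans hcount
    _ ≤ ∑ x ∈ B, ndeg G x := Finset.sum_le_sum hB_deg
    _ ≤ ∑ x ∈ B, ndeg G (g x) := Finset.sum_le_sum hdeg
    _ = ∑ y ∈ B.image g, ndeg G y := (Finset.sum_image hinj).symm
    _ < ∑ y ∈ A, ndeg G y :=
      Finset.sum_lt_sum_of_subset himA hyA hyim (hpos y hyA) fun _ _ _ => Nat.zero_le _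
  exact this.false

theorem vizing_stmt_2_general [Fintype V] (H : SimpleGraph V) (X T A : Set V)
    (hbip : IsBipartiteWith H X T)
    (hdeg : ∀ x ∈ X, ∀ y ∈ T, H.Adj x y → ndeg H x ≤ ndeg H y)
    (hA : A ⊆ T)
    (hmindeg : ∀ y ∈ A, ∃ x : V, H.Adj y x)
    (hcard : (NSet H A).ncard < A.ncard)
    (hM : HasMatchingSaturating (H.induce (A ∪ NSet H A)) (Subtype.val ⁻¹' NSet H A)) :
    False := by
  classical
  set B := NSet H A
  obtain ⟨g, hinj, hg⟩ := exists_injOn_adj_of_hasMatchingSaturating hM Set.subset_union_right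
  have hBX : B ⊆ X := hbip.nset_subset hA
  have hgA : Set.MapsTo g B A := fun x hx =>
    (hg x hx).1.resolve_right fun hgB =>
      Set.disjoint_left.mp hbip.1 (hBX hgB) (hbip.mem_right_of_adj (hBX hx) (hg x hx).2)
  have hle := card_le_card_of_injOn_ndeg_le H (A := A.toFinset) (B := B.toFinset)
    (by simp only [Set.mem_toFinset]; exact fun y hy v hv => ⟨y, hy, hv⟩)
    (by simpa using fun y hy => ndeg_pos_of_adj (hmindeg y hy).choose_spec)
    (by simpa using hgA) (by simpa using hinj)
    (by simpa using fun x hx => hdeg x (hBX hx) (g x) (hA (hgA hx)) (hg x hx).2)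
  rw [← Set.ncard_eq_toFinset_card', ← Set.ncard_eq_toFinset_card'] at hle
  omega

theorem vizing_stmt_2 [Fintype V] (H : SimpleGraph V) (X T A : Set V)
    (hbip : IsBipartiteWith H X T)
    (hdeg : ∀ x ∈ X, ∀ y ∈ T, H.Adj x y → ndeg H x ≤ ndeg H y)
    (hA : A ⊆ T) (hne : A.Nonempty)
    (hmindeg : ∀ y ∈ A, ∃ x : V, H.Adj y x)
    (hcard : (NSet H A).ncard < A.ncard)
    (hM : HasMatchingSaturating (H.induce (A ∪ NSet H A)) (Subtype.val ⁻¹' NSet H A)) :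
    False :=
  vizing_stmt_2_general H X T A hbip hdeg hA hmindeg hcard hM

end VizingTwoFactor
end

section
/- Let G be a Δ-critical graph and T ⊆ V(G) an independent set containing at most one vertex of degree Δ. Let H* be the bipartite graph with parts X' = V(G)\T and T whose edges are the edges of G between X' and T. Then H* has a matching saturating T. -/
open SimpleGraph

namespace VizingTwoFactor

variable {V : Type*}

/-!
Hall's condition for `T` in `H*` follows by double counting once we know that every neighbour `x`
of a vertex `y ∈ T` has at most `deg y` neighbours in `T`: spread a unit weight over the edges at
each `y ∈ A ⊆ T`, `1 / deg y` per edge; then every vertex of `N(A)` receives weight at most one.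

For the degree bound we may assume `deg y < Δ`. By Vizing's adjacency lemma `x` then has at least
`Δ - deg y + 1` neighbours of degree `Δ` other than `y`, and at most one of them lies in `T`.

The adjacency lemma is proved with multifans. Colour `G - xy` with `Δ` colours and take a maximal
multifan `y = F 0, F 1, …, F p` at `x`. Kempe chain exchanges show that no colour is missing both at
`x` and at a fan vertex, and that the sets of colours missing at the fan vertices are pairwise
disjoint; by maximality all these colours occur on the `p` fan edges at `x`. Every fan vertex of
degree less than `Δ` misses a colour, and `y` misses at least `Δ + 1 - deg y` of them.
-/

open Finset

theorem card_le_card_biUnion_of_forall_card_filter_le {ι α : Type*} [DecidableEq α]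
    (A : Finset ι) (t : ι → Finset α) (hne : ∀ i ∈ A, (t i).Nonempty)
    (h : ∀ i ∈ A, ∀ a ∈ t i, #{j ∈ A | a ∈ t j} ≤ #(t i)) : #A ≤ #(A.biUnion t) := by
  have hshare : ∀ a ∈ A.biUnion t, ∑ i ∈ A with a ∈ t i, (#(t i) : ℚ)⁻¹ ≤ 1 := by
    intro a ha
    obtain ⟨i₀, hi₀, hai₀⟩ := mem_biUnion.1 ha
    have hpos : (0 : ℚ) < #{j ∈ A | a ∈ t j} := by
      exact_mod_cast card_pos.2 ⟨i₀, mem_filter.2 ⟨hi₀, hai₀⟩⟩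
    calc ∑ i ∈ A with a ∈ t i, (#(t i) : ℚ)⁻¹
        ≤ ∑ i ∈ A with a ∈ t i, (#{j ∈ A | a ∈ t j} : ℚ)⁻¹ := by
          refine sum_le_sum fun i hi => inv_anti₀ hpos ?_
          obtain ⟨hiA, hai⟩ := mem_filter.1 hi
          exact_mod_cast h i hiA a hai
      _ = 1 := by rw [sum_const, nsmul_eq_mul, mul_inv_cancel₀ hpos.ne']
  have : (#A : ℚ) ≤ #(A.biUnion t) :=
    calc (#A : ℚ) = ∑ i ∈ A, ∑ _a ∈ t i, (#(t i) : ℚ)⁻¹ := by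
          rw [card_eq_sum_ones, Nat.cast_sum]
          refine sum_congr rfl fun i hi => ?_
          have : (#(t i) : ℚ) ≠ 0 := by exact_mod_cast (hne i hi).card_pos.ne'
          rw [sum_const, nsmul_eq_mul, mul_inv_cancel₀ this, Nat.cast_one]
      _ = ∑ a ∈ A.biUnion t, ∑ i ∈ A with a ∈ t i, (#(t i) : ℚ)⁻¹ :=
          sum_comm' fun i a => by simp only [mem_biUnion, mem_filter]; grind
      _ ≤ ∑ _a ∈ A.biUnion t, 1 := sum_le_sum hshare
      _ = #(A.biUnion t) := by simp
  exact_mod_cast this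

theorem exists_isMatching_of_card_filter_neighborFinset_le_degree [Fintype V]
    {H : SimpleGraph V} [DecidableRel H.Adj] {S T : Set V} [DecidablePred (· ∈ T)]
    (hH : H.IsBipartiteWith T S) (hpos : ∀ v ∈ T, 0 < H.degree v)
    (hdeg : ∀ v ∈ T, ∀ u, H.Adj v u → #{w ∈ H.neighborFinset u | w ∈ T} ≤ H.degree v) :
    ∃ M : H.Subgraph, T ⊆ M.verts ∧ M.IsMatching := by
  classical
  refine exists_isMatching_of_forall_ncard_le hH fun s hs => ?_
  obtain ⟨A, rfl⟩ := s.toFinite.exists_finset_coe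
  have hunion :
      (⋃ v ∈ (A : Set V), H.neighborSet v) = ↑(A.biUnion fun v => H.neighborFinset v) := by
    ext; simp
  rw [hunion, Set.ncard_coe_finset, Set.ncard_coe_finset]
  refine card_le_card_biUnion_of_forall_card_filter_le A _
    (fun v hv => card_pos.1 (hpos v (hs hv))) fun v hv u hu => ?_
  rw [mem_neighborFinset] at hu
  refine le_trans (card_le_card fun w hw => ?_) (hdeg v (hs hv) u hu)
  obtain ⟨hwA, huw⟩ := mem_filter.1 hw
  exact mem_filter.2 ⟨(mem_neighborFinset _ _ _).2 ((mem_neighborFinset _ _ _).1 huw).symm, hs hwA⟩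

section MaxDegreeTwo

variable {H : SimpleGraph V}

theorem mem_of_reachable_of_adj_closed {s : Set V} (hs : ∀ u ∈ s, ∀ v, H.Adj u v → v ∈ s)
    {b a : V} (hba : H.Reachable b a) (hb : b ∈ s) : a ∈ s := by
  obtain ⟨W⟩ := hba
  induction W with
  | nil => exact hb
  | cons huv _ ih => exact ih (hs _ hb _ huv)

variable [Finite V]

theorem neighborSet_toSubgraph_eq_of_isPath (hdeg : ∀ v, (H.neighborSet v).ncard ≤ 2)
    {b c : V} (hb : (H.neighborSet b).ncard ≤ 1) (hc : (H.neighborSet c).ncard ≤ 1)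
    (hbc : b ≠ c) {P : H.Walk b c} (hP : P.IsPath) {u : V} (hu : u ∈ P.support) :
    P.toSubgraph.neighborSet u = H.neighborSet u := by
  have hnil : ¬ P.Nil := fun h => hbc h.eq
  refine Set.eq_of_subset_of_ncard_le (P.toSubgraph.neighborSet_subset u) ?_
  obtain ⟨i, rfl, hi⟩ := Walk.mem_support_iff_exists_getVert.1 hu
  rcases Nat.eq_zero_or_pos i with rfl | hi0
  · rwa [P.getVert_zero, hP.neighborSet_toSubgraph_startpoint hnil, Set.ncard_singleton]
  rcases hi.eq_or_lt with rfl | hilt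
  · rwa [P.getVert_length, hP.neighborSet_toSubgraph_endpoint hnil, Set.ncard_singleton]
  · rw [hP.ncard_neighborSet_toSubgraph_internal_eq_two hi0.ne' hilt]
    exact hdeg _

/-- A path from `b` to `c` is closed under adjacency, so it would contain `a` as an inner vertex,
with two neighbours. -/
theorem not_reachable_of_ncard_neighborSet_le_one (hdeg : ∀ v, (H.neighborSet v).ncard ≤ 2)
    {a b c : V} (ha : (H.neighborSet a).ncard ≤ 1) (hb : (H.neighborSet b).ncard ≤ 1)
    (hc : (H.neighborSet c).ncard ≤ 1) (hab : a ≠ b) (hac : a ≠ c) (hbc : b ≠ c)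
    (hba : H.Reachable b a) : ¬ H.Reachable b c := by
  classical
  rintro ⟨W⟩
  obtain ⟨P, hP⟩ := W.toPath
  have hclosed : ∀ u ∈ P.support, ∀ v, H.Adj u v → v ∈ P.support := fun u hu v huv => by
    rw [← mem_neighborSet, ← neighborSet_toSubgraph_eq_of_isPath hdeg hb hc hbc hP hu] at huv
    exact P.mem_verts_toSubgraph.1 (Subgraph.Adj.snd_mem huv)
  obtain ⟨i, rfl, hi⟩ := Walk.mem_support_iff_exists_getVert.1
    (mem_of_reachable_of_adj_closed hclosed hba P.start_mem_support)
  have hi0 : i ≠ 0 := by rintro rfl; exact hab P.getVert_zero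
  have hilt : i < P.length := hi.lt_of_ne (by rintro rfl; exact hac P.getVert_length)
  have h2 := hP.ncard_neighborSet_toSubgraph_internal_eq_two hi0 hilt
  have := Set.ncard_le_ncard (P.toSubgraph.neighborSet_subset (P.getVert i)) (Set.toFinite _)
  omega

end MaxDegreeTwo

/-- A proper `k`-edge-colouring of `H` recorded on ordered pairs of vertices, which makes local
recolouring easy to express. -/
structure PairColoring (H : SimpleGraph V) (k : ℕ) where
  color : V → V → Option (Fin k)
  symm : ∀ u v, color u v = color v u
  adj_iff : ∀ u v, H.Adj u v ↔ color u v ≠ none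
  proper : ∀ u v w i, color u v = some i → color u w = some i → v = w

namespace PairColoring

variable {H H' : SimpleGraph V} {k : ℕ} (φ : PairColoring H k)

theorem adj_of_color_eq_some {u v : V} {i : Fin k} (h : φ.color u v = some i) : H.Adj u v :=
  (φ.adj_iff u v).2 (by simp [h])

theorem color_eq_none_of_not_adj {u v : V} (h : ¬ H.Adj u v) : φ.color u v = none := by
  simpa [φ.adj_iff] using h

def Missing (v : V) (i : Fin k) : Prop := ∀ u, φ.color v u ≠ some i

open Classical in
/-- `H'` is `H` with the edge `ab` added, if it is not already present. -/
noncomputable def setEdge {a b : V} (hH' : ∀ u v, H'.Adj u v ↔ H.Adj u v ∨ s(u, v) = s(a, b))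
    (i : Fin k) (ha : φ.Missing a i) (hb : φ.Missing b i) : PairColoring H' k where
  color u v := if s(u, v) = s(a, b) then some i else φ.color u v
  symm u v := by rw [Sym2.eq_swap, φ.symm]
  adj_iff u v := by
    rw [hH', φ.adj_iff]
    split_ifs with h <;> simp [h]
  proper u v w j h₁ h₂ := by
    split_ifs at h₁ h₂ with e₁ e₂ e₂
    · exact Sym2.congr_right.1 (e₁.trans e₂.symm)
    · cases h₁
      rcases Sym2.eq_iff.1 e₁ with ⟨rfl, -⟩ | ⟨rfl, -⟩
      exacts [(ha w h₂).elim, (hb w h₂).elim]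
    · cases h₂
      rcases Sym2.eq_iff.1 e₂ with ⟨rfl, -⟩ | ⟨rfl, -⟩
      exacts [(ha v h₁).elim, (hb v h₁).elim]
    · exact φ.proper u v w j h₁ h₂

section setEdge

variable {a b : V} {hH' : ∀ u v, H'.Adj u v ↔ H.Adj u v ∨ s(u, v) = s(a, b)} {i : Fin k}
  {ha : φ.Missing a i} {hb : φ.Missing b i}

theorem setEdge_color_of_eq {u v : V} (h : s(u, v) = s(a, b)) :
    (φ.setEdge hH' i ha hb).color u v = some i := if_pos h

theorem setEdge_color_of_ne {u v : V} (h : s(u, v) ≠ s(a, b)) :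
    (φ.setEdge hH' i ha hb).color u v = φ.color u v := if_neg h

theorem setEdge_missing_iff {w : V} (hwa : w ≠ a) (hwb : w ≠ b) (j : Fin k) :
    (φ.setEdge hH' i ha hb).Missing w j ↔ φ.Missing w j := by
  have hne : ∀ u, s(w, u) ≠ s(a, b) := fun u h => by
    rcases Sym2.eq_iff.1 h with ⟨rfl, -⟩ | ⟨rfl, -⟩ <;> contradiction
  simp only [Missing, φ.setEdge_color_of_ne (hne _)]

theorem setEdge_missing_of_color_eq {j : Fin k} (hj : φ.color a b = some j) :
    (φ.setEdge hH' i ha hb).Missing a j := by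
  intro u
  by_cases h : s(a, u) = s(a, b)
  · rw [φ.setEdge_color_of_eq h]
    exact fun hij => ha b (hj.trans hij.symm)
  · rw [φ.setEdge_color_of_ne h]
    exact fun hu => h (by rw [φ.proper a u b j hu hj])

end setEdge

theorem hasEdgeColoring (φ : PairColoring H k) : HasEdgeColoring H k := by
  have hsome : ∀ e : H.edgeSet, (Sym2.lift ⟨φ.color, φ.symm⟩ (e : Sym2 V)).isSome := by
    rintro ⟨e, he⟩
    induction e with
    | _ u v => simpa [Option.isSome_iff_ne_none, ← φ.adj_iff] using he
  refine ⟨fun e => (Sym2.lift ⟨φ.color, φ.symm⟩ (e : Sym2 V)).get (hsome e), ?_⟩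
  rintro ⟨e₁, he₁⟩ ⟨e₂, he₂⟩ hne ⟨v, hv₁, hv₂⟩ heq
  obtain ⟨a, rfl⟩ : ∃ a, e₁ = s(v, a) := ⟨_, (Sym2.other_spec hv₁).symm⟩
  obtain ⟨b, rfl⟩ : ∃ b, e₂ = s(v, b) := ⟨_, (Sym2.other_spec hv₂).symm⟩
  have h₁ := Option.eq_some_of_isSome (hsome ⟨_, he₁⟩)
  have h₂ := Option.eq_some_of_isSome (hsome ⟨_, he₂⟩)
  simp only [Sym2.lift_mk] at h₁ h₂ heq
  rw [heq] at h₁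
  obtain rfl := φ.proper v a b _ h₁ h₂
  exact hne rfl

/-- The subgraph of edges coloured `α` or `β`; its components are the Kempe chains. -/
def kempeGraph (α β : Fin k) : SimpleGraph V where
  Adj u v := φ.color u v = some α ∨ φ.color u v = some β
  symm := ⟨fun u v (h : _ ∨ _) => show _ ∨ _ by rwa [φ.symm v u]⟩
  loopless := ⟨fun u h =>
    H.loopless.irrefl u (h.elim φ.adj_of_color_eq_some φ.adj_of_color_eq_some)⟩

theorem ncard_setOf_color_eq_le_one [Finite V] (v : V) (i : Fin k) :
    {u | φ.color v u = some i}.ncard ≤ 1 :=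
  (Set.ncard_le_one (Set.toFinite _)).2 fun _ ha _ hb => φ.proper v _ _ i ha hb

theorem ncard_neighborSet_kempeGraph_le_two [Finite V] (α β : Fin k) (v : V) :
    ((φ.kempeGraph α β).neighborSet v).ncard ≤ 2 :=
  calc _ ≤ ({u | φ.color v u = some α} ∪ {u | φ.color v u = some β}).ncard :=
        Set.ncard_le_ncard (fun _ h => h) (Set.toFinite _)
    _ ≤ _ := Set.ncard_union_le _ _
    _ ≤ 2 := add_le_add (φ.ncard_setOf_color_eq_le_one v α) (φ.ncard_setOf_color_eq_le_one v β)

theorem ncard_neighborSet_kempeGraph_le_one_of_missing_left [Finite V] {α β : Fin k} {v : V}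
    (hα : φ.Missing v α) : ((φ.kempeGraph α β).neighborSet v).ncard ≤ 1 :=
  (Set.ncard_le_ncard (fun u h => h.resolve_left (hα u)) (Set.toFinite _)).trans
    (φ.ncard_setOf_color_eq_le_one v β)

theorem ncard_neighborSet_kempeGraph_le_one_of_missing_right [Finite V] {α β : Fin k} {v : V}
    (hβ : φ.Missing v β) : ((φ.kempeGraph α β).neighborSet v).ncard ≤ 1 :=
  (Set.ncard_le_ncard (fun u h => h.resolve_right (hβ u)) (Set.toFinite _)).trans
    (φ.ncard_setOf_color_eq_le_one v α)

open Classical in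
noncomputable def kempeSwap (α β : Fin k) (z : V) : PairColoring H k where
  color u v := if (φ.kempeGraph α β).Reachable z u then (φ.color u v).map (Equiv.swap α β)
    else φ.color u v
  symm u v := by
    have hfix :
        ¬ (φ.kempeGraph α β).Adj u v → (φ.color u v).map (Equiv.swap α β) = φ.color u v := by
      intro h
      rcases hc : φ.color u v with _ | j
      · rfl
      · simp only [kempeGraph, hc, Option.some_inj, not_or] at h
        simp [Equiv.swap_apply_of_ne_of_ne h.1 h.2]
    by_cases hu : (φ.kempeGraph α β).Reachable z u <;>
      by_cases hv : (φ.kempeGraph α β).Reachable z v <;> simp only [hu, hv, if_true, if_false]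
    · rw [φ.symm]
    · rw [hfix fun h => hv (hu.trans h.reachable), φ.symm]
    · rw [φ.symm v u, hfix fun h => hu (hv.trans h.symm.reachable)]
    · rw [φ.symm]
  adj_iff u v := by
    rw [φ.adj_iff]
    split_ifs <;> simp
  proper u v w i h₁ h₂ := by
    split_ifs at h₁ h₂
    · obtain ⟨j, hj, -⟩ := Option.map_eq_some_iff.1 h₁
      exact φ.proper u v w j hj
        ((Option.map_injective (Equiv.injective _) (h₂.trans h₁.symm)).trans hj)
    · exact φ.proper u v w i h₁ h₂

open Classical in
noncomputable def missingColors (v : V) : Finset (Fin k) := {i | φ.Missing v i}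

variable {φ} in
theorem mem_missingColors {v : V} {i : Fin k} : i ∈ φ.missingColors v ↔ φ.Missing v i := by
  simp [missingColors]

theorem le_card_add_card_missingColors {v : V} {s : Finset V} (hs : ∀ u, H.Adj v u → u ∈ s) :
    k ≤ #s + #(φ.missingColors v) := by
  have hpresent :
      ((φ.missingColors v)ᶜ).map ⟨some, Option.some_injective _⟩ ⊆ s.image (φ.color v) := by
    intro c hc
    obtain ⟨i, hi, rfl⟩ := mem_map.1 hc
    obtain ⟨u, hu⟩ := not_forall_not.1 (mt mem_missingColors.2 (mem_compl.1 hi))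
    exact mem_image.2 ⟨u, hs u (φ.adj_of_color_eq_some hu), hu⟩
  have := (card_le_card hpresent).trans card_image_le
  rw [card_map, card_compl, Fintype.card_fin] at this
  omega

variable {φ}

open Classical in
theorem kempeSwap_color (α β : Fin k) (z u v : V) :
    (φ.kempeSwap α β z).color u v = if (φ.kempeGraph α β).Reachable z u then
      (φ.color u v).map (Equiv.swap α β) else φ.color u v := rfl

theorem kempeSwap_color_of_not_reachable {α β : Fin k} {z u : V}
    (hu : ¬ (φ.kempeGraph α β).Reachable z u) (v : V) :
    (φ.kempeSwap α β z).color u v = φ.color u v := if_neg hu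

open Classical in
theorem kempeSwap_missing_iff {α β : Fin k} {z u : V} (j : Fin k) :
    (φ.kempeSwap α β z).Missing u j ↔
      φ.Missing u (if (φ.kempeGraph α β).Reachable z u then Equiv.swap α β j else j) := by
  simp only [Missing, kempeSwap_color]
  split_ifs <;> simp [Option.map_eq_some_iff, Equiv.swap_apply_eq_iff]

end PairColoring

open Classical in
theorem HasEdgeColoring.nonempty_pairColoring {H : SimpleGraph V} {k : ℕ}
    (hH : HasEdgeColoring H k) : Nonempty (PairColoring H k) := by
  obtain ⟨f, hf⟩ := hH
  refine ⟨⟨fun u v => if h : H.Adj u v then some (f ⟨s(u, v), h⟩) else none, ?_, ?_, ?_⟩⟩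
  · intro u v
    by_cases h : H.Adj u v
    · rw [dif_pos h, dif_pos h.symm]
      exact congrArg (some ∘ f) (Subtype.ext Sym2.eq_swap)
    · rw [dif_neg h, dif_neg (mt H.adj_symm h)]
  · intro u v
    split_ifs with h <;> simp [h]
  · intro u v w i h₁ h₂
    split_ifs at h₁ h₂ with hv hw
    by_contra hvw
    refine hf ⟨_, hv⟩ ⟨_, hw⟩ (fun h => hvw (Sym2.congr_right.1 (congrArg Subtype.val h)))
      ⟨u, Sym2.mem_mk_left u v, Sym2.mem_mk_left u w⟩ ?_
    exact Option.some_inj.1 (h₁.trans h₂.symm)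

theorem adj_iff_adj_or_eq_of_adj {H : SimpleGraph V} {a b : V} (hab : H.Adj a b) (u v : V) :
    H.Adj u v ↔ H.Adj u v ∨ s(u, v) = s(a, b) := by
  refine ⟨Or.inl, fun h => h.elim id fun e => ?_⟩
  rw [← mem_edgeSet, e]
  exact hab

theorem adj_iff_deleteEdges_adj_or_eq {G : SimpleGraph V} {x y : V} (hxy : G.Adj x y) (u v : V) :
    G.Adj u v ↔ (G.deleteEdges {s(x, y)}).Adj u v ∨ s(u, v) = s(x, y) := by
  rw [deleteEdges_adj, Set.mem_singleton_iff]
  refine ⟨fun h => (em _).elim Or.inr fun e => Or.inl ⟨h, e⟩, fun h => h.elim And.left fun e => ?_⟩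
  rw [← mem_edgeSet, e]
  exact hxy

section Multifan

variable {G : SimpleGraph V} {k : ℕ} {x y : V}

theorem deleteEdges_adj_of_ne {v : V} (hxv : G.Adj x v) (hvy : v ≠ y) :
    (G.deleteEdges {s(x, y)}).Adj x v := by
  rw [deleteEdges_adj, Set.mem_singleton_iff, Sym2.congr_right]
  exact ⟨hxv, hvy⟩

namespace PairColoring

variable (φ : PairColoring (G.deleteEdges {s(x, y)}) k)

theorem hasEdgeColoring_of_missing (hxy : G.Adj x y) {i : Fin k} (hx : φ.Missing x i)
    (hy : φ.Missing y i) : HasEdgeColoring G k :=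
  (φ.setEdge (adj_iff_deleteEdges_adj_or_eq hxy) i hx hy).hasEdgeColoring

variable [Fintype V] [DecidableRel G.Adj]

theorem le_degree_add_card_missingColors (v : V) : k ≤ G.degree v + #(φ.missingColors v) :=
  φ.le_card_add_card_missingColors fun _ h => (mem_neighborFinset _ _ _).2 (G.deleteEdges_le _ h)

theorem lt_degree_add_card_missingColors {a b : V} (hab : G.Adj a b) (he : s(a, b) = s(x, y)) :
    k < G.degree a + #(φ.missingColors a) := by
  classical
  have hcard := φ.le_card_add_card_missingColors (s := (G.neighborFinset a).erase b) fun u hu => by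
    obtain ⟨hau, hne⟩ := deleteEdges_adj.1 hu
    exact mem_erase.2 ⟨fun e => hne (e ▸ he), (mem_neighborFinset _ _ _).2 hau⟩
  rw [card_erase_of_mem ((mem_neighborFinset _ _ _).2 hab), card_neighborFinset_eq_degree] at hcard
  have := G.degree_pos_iff_exists_adj a |>.2 ⟨b, hab⟩
  omega

end PairColoring

/-- A multifan at `x` with respect to the uncoloured edge `x (F 0)`. -/
structure IsMultifan (φ : PairColoring (G.deleteEdges {s(x, y)}) k) (F : ℕ → V) (p : ℕ) :
    Prop where
  zero : F 0 = y
  adj : ∀ t ≤ p, G.Adj x (F t)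
  injOn : Set.InjOn F (Set.Iic p)
  exists_missing : ∀ t, 1 ≤ t → t ≤ p →
    ∃ s < t, ∃ i, φ.color x (F t) = some i ∧ φ.Missing (F s) i

namespace IsMultifan

variable {φ ψ : PairColoring (G.deleteEdges {s(x, y)}) k} {F : ℕ → V} {p : ℕ}

theorem ne_of_ne (hF : IsMultifan φ F p) {s t : ℕ} (hs : s ≤ p) (ht : t ≤ p) (hst : s ≠ t) :
    F s ≠ F t :=
  fun h => hst (hF.injOn hs ht h)

theorem ne_y (hF : IsMultifan φ F p) {t : ℕ} (ht1 : 1 ≤ t) (ht : t ≤ p) : F t ≠ y :=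
  hF.zero ▸ hF.ne_of_ne ht (Nat.zero_le p) (by omega)

theorem mono (hF : IsMultifan φ F p) {q : ℕ} (hqp : q ≤ p) : IsMultifan φ F q where
  zero := hF.zero
  adj t ht := hF.adj t (ht.trans hqp)
  injOn := hF.injOn.mono (Set.Iic_subset_Iic.2 hqp)
  exists_missing t ht1 ht := hF.exists_missing t ht1 (ht.trans hqp)

theorem of_color_eq (hF : IsMultifan φ F p)
    (hcolor : ∀ t, 1 ≤ t → t ≤ p → ψ.color x (F t) = φ.color x (F t))
    (hmissing : ∀ t, 1 ≤ t → t ≤ p → ∀ s < t, ∀ i, φ.color x (F t) = some i →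
      φ.Missing (F s) i → ψ.Missing (F s) i) :
    IsMultifan ψ F p where
  zero := hF.zero
  adj := hF.adj
  injOn := hF.injOn
  exists_missing t ht1 ht := by
    obtain ⟨s, hst, i, hi, hs⟩ := hF.exists_missing t ht1 ht
    exact ⟨s, hst, i, (hcolor t ht1 ht).trans hi, hmissing t ht1 ht s hst i hi hs⟩

theorem lt_card [Fintype V] (hF : IsMultifan φ F p) : p < Fintype.card V := by
  have := card_le_card_of_injOn F (s := range (p + 1)) (t := univ)
    (fun _ _ => mem_coe.2 (mem_univ _))
    (hF.injOn.mono fun t ht => Nat.lt_succ_iff.1 (mem_range.1 ht))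
  simpa using this

theorem update (hF : IsMultifan φ F p) {v : V} (hxv : G.Adj x v)
    (hv : ∀ t ≤ p, F t ≠ v) {s : ℕ} (hs : s ≤ p) {i : Fin k} (hi : φ.color x v = some i)
    (hsi : φ.Missing (F s) i) : IsMultifan φ (Function.update F (p + 1) v) (p + 1) := by
  have hF' : ∀ t ≤ p, Function.update F (p + 1) v t = F t :=
    fun t ht => Function.update_of_ne (by omega) _ _
  have hlast : Function.update F (p + 1) v (p + 1) = v := Function.update_self _ _ _
  refine ⟨(hF' 0 (Nat.zero_le p)).trans hF.zero, fun t ht => ?_, fun t ht t' ht' htt' => ?_,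
    fun t ht1 ht => ?_⟩
  · rcases ht.lt_or_eq with ht | rfl
    · rw [hF' t (by omega)]; exact hF.adj t (by omega)
    · rwa [hlast]
  · simp only [Set.mem_Iic] at ht ht'
    rcases ht.lt_or_eq with ht | rfl <;> rcases ht'.lt_or_eq with ht' | rfl
    · rw [hF' t (by omega), hF' t' (by omega)] at htt'
      exact hF.injOn (Set.mem_Iic.2 (by omega)) (Set.mem_Iic.2 (by omega)) htt'
    · rw [hF' t (by omega), hlast] at htt'; exact (hv t (by omega) htt').elim
    · rw [hF' t' (by omega), hlast] at htt'; exact (hv t' (by omega) htt'.symm).elim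
    · rfl
  · rcases ht.lt_or_eq with ht | rfl
    · obtain ⟨s', hs't, j, hj, hs'⟩ := hF.exists_missing t ht1 (by omega)
      exact ⟨s', hs't, j, by rwa [hF' t (by omega)], by rwa [hF' s' (by omega)]⟩
    · exact ⟨s, by omega, i, by rwa [hlast], by rwa [hF' s hs]⟩

/-- Each `F (t + 1)` misses a colour or has degree `k`. -/
theorem le_sum_card_missingColors_add_card [Fintype V] [DecidableEq V]
    [DecidableRel G.Adj] (hF : IsMultifan φ F p) (hdeg : ∀ v, G.degree v ≤ k) :
    p ≤ ∑ t ∈ range p, #(φ.missingColors (F (t + 1))) +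
      #{z | G.Adj x z ∧ z ≠ y ∧ G.degree z = k} := by
  set Z : Finset V := {z | G.Adj x z ∧ z ≠ y ∧ G.degree z = k}
  have hfan : ∀ t ∈ range p,
      1 ≤ #(φ.missingColors (F (t + 1))) + if F (t + 1) ∈ Z then 1 else 0 := by
    intro t ht
    have htp : t + 1 ≤ p := mem_range.1 ht
    split_ifs with hZ
    · omega
    have hlt : G.degree (F (t + 1)) < k := (hdeg _).lt_of_ne fun h =>
      hZ (mem_filter.2 ⟨mem_univ _, hF.adj _ htp, hF.ne_y (by omega) htp, h⟩)
    have := φ.le_degree_add_card_missingColors (F (t + 1))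
    omega
  have hZ : #{t ∈ range p | F (t + 1) ∈ Z} ≤ #Z :=
    card_le_card_of_injOn (fun t => F (t + 1)) (fun t ht => (mem_filter.1 ht).2)
      fun t ht t' ht' h => Nat.succ_injective <| hF.injOn
        (Set.mem_Iic.2 (mem_range.1 (mem_filter.1 ht).1))
        (Set.mem_Iic.2 (mem_range.1 (mem_filter.1 ht').1)) h
  calc p = ∑ _t ∈ range p, 1 := by simp
    _ ≤ ∑ t ∈ range p, (#(φ.missingColors (F (t + 1))) + if F (t + 1) ∈ Z then 1 else 0) :=
        sum_le_sum hfan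
    _ = ∑ t ∈ range p, #(φ.missingColors (F (t + 1))) + #{t ∈ range p | F (t + 1) ∈ Z} := by
        rw [sum_add_distrib, card_filter]
    _ ≤ _ := by omega

section

variable (hnc : ¬ HasEdgeColoring G k) (hxy : G.Adj x y)
include hnc hxy

/-- Recolouring `x (F i)` with a colour missing at `x` and at `F i` frees its old colour at `x` and
at an earlier vertex of the fan. -/
theorem not_missing_of_missing_center (hF : IsMultifan φ F p) {i : ℕ} (hip : i ≤ p) {c : Fin k}
    (hx : φ.Missing x c) : ¬ φ.Missing (F i) c := by
  induction i using Nat.strong_induction_on generalizing φ F p c with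
  | _ i ih =>
  intro hi
  rcases Nat.eq_zero_or_pos i with rfl | hi0
  · rw [hF.zero] at hi
    exact hnc (φ.hasEdgeColoring_of_missing hxy hx hi)
  obtain ⟨s, hsi, d, hd, hsd⟩ := hF.exists_missing i hi0 hip
  have hxFi := deleteEdges_adj_of_ne (hF.adj i hip) (hF.ne_y hi0 hip)
  have hFsx : F s ≠ x := (hF.adj s (by omega)).ne'
  have hFsi : F s ≠ F i := hF.ne_of_ne (by omega) hip hsi.ne
  let ψ := φ.setEdge (adj_iff_adj_or_eq_of_adj hxFi) c hx hi
  have hψF : IsMultifan ψ F (i - 1) := by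
    refine (hF.mono (by omega)).of_color_eq (fun t _ ht => ?_) fun t _ ht s' hs't _ _ hs' => ?_
    · exact φ.setEdge_color_of_ne fun e => hF.ne_of_ne (by omega) hip (by omega)
        (Sym2.congr_right.1 e)
    · exact (φ.setEdge_missing_iff (hF.adj s' (by omega)).ne'
        (hF.ne_of_ne (by omega) hip (by omega)) _).2 hs'
  exact ih s hsi hψF (by omega) (φ.setEdge_missing_of_color_eq hd)
    ((φ.setEdge_missing_iff hFsx hFsi d).2 hsd)

/-- If not, swapping `α` and `β` on the chain through `F h` would make `β` missing at both `x` and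
`F h`. -/
theorem reachable_of_missing (hF : IsMultifan φ F p) {α β : Fin k} (hβ : φ.Missing x β) {h : ℕ}
    (hhp : h ≤ p) (hα : φ.Missing (F h) α) : (φ.kempeGraph α β).Reachable x (F h) := by
  induction h using Nat.strong_induction_on with
  | _ h ih =>
  by_contra hr
  have hxr : ¬ (φ.kempeGraph α β).Reachable (F h) x := fun h' => hr h'.symm
  let ψ := φ.kempeSwap α β (F h)
  have hψx : ψ.Missing x β := by
    rw [PairColoring.kempeSwap_missing_iff, if_neg hxr]
    exact hβ
  have hψh : ψ.Missing (F h) β := by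
    rw [PairColoring.kempeSwap_missing_iff, if_pos Reachable.rfl, Equiv.swap_apply_right]
    exact hα
  have hψF : IsMultifan ψ F h := by
    refine (hF.mono hhp).of_color_eq (fun t _ _ => ?_) fun t _ hth s hst j hj hs => ?_
    · exact PairColoring.kempeSwap_color_of_not_reachable hxr _
    rw [PairColoring.kempeSwap_missing_iff]
    split_ifs with hrs
    · have hjβ : j ≠ β := fun e => hβ _ (e ▸ hj)
      have hjα : j ≠ α := fun e => hr ((ih s (by omega) (by omega) (e ▸ hs)).trans hrs.symm)
      rwa [Equiv.swap_apply_of_ne_of_ne hjα hjβ]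
    · exact hs
  exact hψF.not_missing_of_missing_center hnc hxy le_rfl hψx hψh

/-- Both `F i` and `F j` would be ends of the `(α, β)`-chain through `x`, a path with end `x`. -/
theorem not_missing_of_missing [Finite V] (hF : IsMultifan φ F p) {β : Fin k}
    (hβ : φ.Missing x β) {i j : ℕ} (hi : i ≤ p) (hj : j ≤ p) (hij : i ≠ j) {α : Fin k}
    (hα : φ.Missing (F i) α) : ¬ φ.Missing (F j) α := fun hα' =>
  not_reachable_of_ncard_neighborSet_le_one (φ.ncard_neighborSet_kempeGraph_le_two α β)
    (φ.ncard_neighborSet_kempeGraph_le_one_of_missing_left hα)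
    (φ.ncard_neighborSet_kempeGraph_le_one_of_missing_right hβ)
    (φ.ncard_neighborSet_kempeGraph_le_one_of_missing_left hα')
    (hF.adj i hi).ne' (hF.ne_of_ne hi hj hij) (hF.adj j hj).ne
    (hF.reachable_of_missing hnc hxy hβ hi hα) (hF.reachable_of_missing hnc hxy hβ hj hα')

/-- The edge at `x` of such a colour would otherwise extend the multifan. -/
theorem exists_color_eq_of_missing (hF : IsMultifan φ F p)
    (hmax : ∀ F' q, IsMultifan φ F' q → q ≤ p) {s : ℕ} (hs : s ≤ p) {i : Fin k}
    (hi : φ.Missing (F s) i) : ∃ t ∈ Icc 1 p, φ.color x (F t) = some i := by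
  obtain ⟨v, hv⟩ := not_forall_not.1 fun h => hF.not_missing_of_missing_center hnc hxy hs h hi
  by_cases hvF : ∃ t ≤ p, F t = v
  · obtain ⟨t, htp, rfl⟩ := hvF
    refine ⟨t, mem_Icc.2 ⟨Nat.one_le_iff_ne_zero.2 ?_, htp⟩, hv⟩
    rintro rfl
    rw [hF.zero, φ.color_eq_none_of_not_adj (by simp)] at hv
    cases hv
  · push Not at hvF
    have := hmax _ _ (hF.update (G.deleteEdges_le _ (φ.adj_of_color_eq_some hv)) hvF hs hv hi)
    omega

theorem sum_card_missingColors_le [Finite V] (hF : IsMultifan φ F p)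
    (hmax : ∀ F' q, IsMultifan φ F' q → q ≤ p) {β : Fin k} (hβ : φ.Missing x β) :
    ∑ s ∈ range (p + 1), #(φ.missingColors (F s)) ≤ p := by
  have hdisj : (range (p + 1) : Set ℕ).PairwiseDisjoint fun s => φ.missingColors (F s) :=
    fun i hi j hj hij => disjoint_left.2 fun α hα hα' =>
      hF.not_missing_of_missing hnc hxy hβ (Nat.lt_succ_iff.1 (mem_range.1 hi))
        (Nat.lt_succ_iff.1 (mem_range.1 hj)) hij (PairColoring.mem_missingColors.1 hα)
        (PairColoring.mem_missingColors.1 hα')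
  have hsub : ((range (p + 1)).biUnion fun s => φ.missingColors (F s)).map
      ⟨some, Option.some_injective _⟩ ⊆ (Icc 1 p).image fun t => φ.color x (F t) := by
    intro c hc
    obtain ⟨i, hi, rfl⟩ := mem_map.1 hc
    obtain ⟨s, hs, hsi⟩ := mem_biUnion.1 hi
    obtain ⟨t, ht, hti⟩ := hF.exists_color_eq_of_missing hnc hxy hmax
      (Nat.lt_succ_iff.1 (mem_range.1 hs)) (PairColoring.mem_missingColors.1 hsi)
    exact mem_image.2 ⟨t, ht, hti⟩
  rw [← card_biUnion hdisj, ← card_map ⟨some, Option.some_injective _⟩]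
  exact (card_le_card hsub).trans (card_image_le.trans (by simp))

end

end IsMultifan

theorem exists_maximal_isMultifan [Fintype V] (hxy : G.Adj x y)
    (φ : PairColoring (G.deleteEdges {s(x, y)}) k) :
    ∃ F p, IsMultifan φ F p ∧ ∀ F' q, IsMultifan φ F' q → q ≤ p := by
  let S := {q | ∃ F, IsMultifan φ F q}
  have hbdd : BddAbove S := ⟨Fintype.card V, fun q ⟨_, hF⟩ => hF.lt_card.le⟩
  have h0 : 0 ∈ S := ⟨fun _ => y, rfl, fun _ _ => hxy,
    fun s hs t ht _ => (Nat.le_zero.1 hs).trans (Nat.le_zero.1 ht).symm, fun t h1 h2 => by omega⟩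
  obtain ⟨F, hF⟩ := Nat.sSup_mem ⟨0, h0⟩ hbdd
  exact ⟨F, sSup S, hF, fun F' q hF' => le_csSup hbdd ⟨F', hF'⟩⟩

end Multifan

theorem vizing_adjacency [Fintype V] [DecidableEq V] {G : SimpleGraph V} [DecidableRel G.Adj]
    {k : ℕ} {x y : V} (hnc : ¬ HasEdgeColoring G k)
    (hcol : HasEdgeColoring (G.deleteEdges {s(x, y)}) k) (hdeg : ∀ v, G.degree v ≤ k)
    (hxy : G.Adj x y) : k + 1 ≤ G.degree y + #{z | G.Adj x z ∧ z ≠ y ∧ G.degree z = k} := by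
  obtain ⟨φ⟩ := hcol.nonempty_pairColoring
  obtain ⟨F, p, hF, hmax⟩ := exists_maximal_isMultifan hxy φ
  obtain ⟨β, hβ⟩ : (φ.missingColors x).Nonempty := card_pos.1 <| by
    have := φ.lt_degree_add_card_missingColors hxy rfl
    have := hdeg x
    omega
  have hsum := hF.sum_card_missingColors_le hnc hxy hmax (PairColoring.mem_missingColors.1 hβ)
  rw [sum_range_succ', hF.zero] at hsum
  have hcount := hF.le_sum_card_missingColors_add_card hdeg
  have hy := φ.lt_degree_add_card_missingColors hxy.symm Sym2.eq_swap
  omega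

theorem ndeg_eq_degree {G : SimpleGraph V} (v : V) [Fintype (G.neighborSet v)] :
    ndeg G v = G.degree v := by
  rw [ndeg, ← card_neighborFinset_eq_degree, ← Set.ncard_coe_finset, coe_neighborFinset]

theorem hasEdgeColoring_chromIdx [Finite V] (H : SimpleGraph V) : HasEdgeColoring H (chromIdx H) :=
  Nat.sInf_mem (s := {k | HasEdgeColoring H k}) ⟨Nat.card H.edgeSet, Finite.equivFin H.edgeSet,
    fun _ _ hne _ h => hne ((Finite.equivFin _).injective h)⟩

namespace IsDeltaCritical

variable {G : SimpleGraph V} {Δ : ℕ}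

theorem not_hasEdgeColoring (hcrit : IsDeltaCritical G Δ) : ¬ HasEdgeColoring G Δ := fun h => by
  have : chromIdx G ≤ Δ := Nat.sInf_le h
  rw [hcrit.2.2.1] at this
  omega

theorem hasEdgeColoring_deleteEdges [Finite V] (hcrit : IsDeltaCritical G Δ) {x y : V}
    (hxy : G.Adj x y) : HasEdgeColoring (G.deleteEdges {s(x, y)}) Δ :=
  hcrit.2.2.2 _ ((mem_edgeSet G).2 hxy) ▸ hasEdgeColoring_chromIdx _

theorem degree_le [Fintype V] [DecidableRel G.Adj] (hcrit : IsDeltaCritical G Δ) (v : V) :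
    G.degree v ≤ Δ := by
  rw [← ndeg_eq_degree]
  exact hcrit.2.1.1 v

/-- If `deg y < Δ`, Vizing's adjacency lemma gives `x` at least `Δ - deg y + 1` neighbours of degree
`Δ` other than `y`, and at most one of them lies in `T`. -/
theorem card_filter_neighborFinset_mem_le_degree [Fintype V] [DecidableEq V] [DecidableRel G.Adj]
    (hcrit : IsDeltaCritical G Δ) {T : Set V} [DecidablePred (· ∈ T)]
    (hT : {y ∈ T | ndeg G y = Δ}.ncard ≤ 1) {x y : V} (hxy : G.Adj x y) :
    #{w ∈ G.neighborFinset x | w ∈ T} ≤ G.degree y := by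
  have hsplit := card_filter_add_card_filter_not (s := G.neighborFinset x) (· ∈ T)
  rw [card_neighborFinset_eq_degree] at hsplit
  have hx := hcrit.degree_le x
  by_cases hyΔ : G.degree y = Δ
  · omega
  have hval := vizing_adjacency hcrit.not_hasEdgeColoring (hcrit.hasEdgeColoring_deleteEdges hxy)
    hcrit.degree_le hxy
  set Z : Finset V := {z | G.Adj x z ∧ z ≠ y ∧ G.degree z = Δ}
  have hZin : #{z ∈ Z | z ∈ T} ≤ 1 := by
    refine le_trans ?_ hT
    rw [← Set.ncard_coe_finset]
    refine Set.ncard_le_ncard (fun z hz => ?_) (Set.toFinite _)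
    simp only [coe_filter, Z, mem_filter, mem_univ, true_and, Set.mem_ofPred_eq] at hz
    exact ⟨hz.2, (ndeg_eq_degree z).trans hz.1.2.2⟩
  have hZout : #{z ∈ Z | z ∉ T} ≤ #{w ∈ G.neighborFinset x | w ∉ T} :=
    card_le_card fun z hz => by
      simp only [Z, mem_filter, mem_univ, true_and, mem_neighborFinset] at hz ⊢
      exact ⟨hz.1.1, hz.2⟩
  have := card_filter_add_card_filter_not (s := Z) (· ∈ T)
  omega

end IsDeltaCritical

theorem betweenGraph_adj_iff_of_mem {G : SimpleGraph V} {T : Set V} (hT : IsIndep G T) {v u : V}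
    (hv : v ∈ T) : (betweenGraph G T).Adj v u ↔ G.Adj v u :=
  ⟨And.left, fun h => ⟨h, Or.inr ⟨hv, fun hu => hT v hv u hu h⟩⟩⟩

theorem betweenGraph_isBipartiteWith (G : SimpleGraph V) (T : Set V) :
    (betweenGraph G T).IsBipartiteWith T Tᶜ :=
  ⟨disjoint_compl_right, fun _ _ h => h.2.symm⟩

theorem vizing_stmt_4 [Fintype V] (G : SimpleGraph V) (Δ : ℕ)
    (hcrit : IsDeltaCritical G Δ) (T : Set V) (hT : IsIndep G T)
    (hδ0 : {y ∈ T | ndeg G y = Δ}.ncard ≤ 1) :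
    HasMatchingSaturating (betweenGraph G T) T := by
  classical
  have hdegree : ∀ v ∈ T, (betweenGraph G T).degree v = G.degree v := fun v hv => by
    simp only [← card_neighborFinset_eq_degree]
    congr 1
    ext u
    simp only [mem_neighborFinset, betweenGraph_adj_iff_of_mem hT hv]
  obtain ⟨M, hTM, hM⟩ := exists_isMatching_of_card_filter_neighborFinset_le_degree
    (betweenGraph_isBipartiteWith G T)
    (fun v hv => hdegree v hv ▸ (G.degree_pos_iff_exists_adj v).2 (hcrit.1 v))
    fun v hv u hvu => by
      have hfilter : {w ∈ (betweenGraph G T).neighborFinset u | w ∈ T} =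
          {w ∈ G.neighborFinset u | w ∈ T} := by
        ext w
        simp only [mem_filter, mem_neighborFinset, and_congr_left_iff]
        intro hw
        rw [adj_comm, betweenGraph_adj_iff_of_mem hT hw, adj_comm]
      rw [hfilter, hdegree v hv]
      exact hcrit.card_filter_neighborFinset_mem_le_degree hδ0 hvu.1.symm
  exact ⟨M, hM, hTM⟩

end VizingTwoFactor
end
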